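/- Let V be a finite-dimensional complex vector space, A, B alternating bilinear forms on V with B nondegenerate, and P = B^{-1}A the recursion operator (B(P x, y) = A(x, y) for all x, y). If a subspace L ⊆ V satisfies L = L^{⊥_B} and P(L) ⊆ L, then for every λ ∈ ℂ such that the form A + λB is nondegenerate, one has L^{⊥_{A+λB}} = L. In particular, L is admissible: its skew-orthogonal complements with respect to A + λB coincide for all but finitely many λ ∈ ℂ. -/
import Mathlib


open Module LinearMap

variable {V : Type*} [AddCommGroup V] [Module ℂ V]

/-- The skew-orthogonal complement of a subspace `L` with respect to a
bilinear form `C`: `{v ∈ V : C u v = 0 for all u ∈ L}`. -/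
noncomputable def orthComp (C : V →ₗ[ℂ] V →ₗ[ℂ] ℂ) (U : Submodule ℂ V) : Submodule ℂ V :=
  ⨅ u ∈ U, LinearMap.ker (C u)

lemma mem_orthComp {C : V →ₗ[ℂ] V →ₗ[ℂ] ℂ} {U : Submodule ℂ V} {v : V} :
    v ∈ orthComp C U ↔ ∀ u ∈ U, C u v = 0 := by
  simp [orthComp]

/-- For `B` nondegenerate with recursion operator `P = B⁻¹A`,
if `L = L^{⊥_B}` and `P(L) ⊆ L`, then `L^{⊥_{A+λB}} = L` for every `λ ∈ ℂ` for
which `A + λB` is nondegenerate. In particular, `L` is admissible: its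
skew-orthogonal complements coincide for all but finitely many `λ ∈ ℂ`. -/
theorem statement_9 [FiniteDimensional ℂ V]
    (A B : V →ₗ[ℂ] V →ₗ[ℂ] ℂ) (hAalt : A.IsAlt) (hBalt : B.IsAlt)
    (hBnd : ∀ v : V, (∀ w : V, B v w = 0) → v = 0)
    (P : V →ₗ[ℂ] V) (hP : ∀ x y : V, B (P x) y = A x y)
    (L : Submodule ℂ V)
    (hLag : orthComp B L = L)
    (hInv : Submodule.map P L ≤ L) :
    (∀ l : ℂ, (∀ v : V, (∀ w : V, (A + l • B) v w = 0) → v = 0) →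
      orthComp (A + l • B) L = L) ∧
    ∃ W : Submodule ℂ V, {l : ℂ | orthComp (A + l • B) L ≠ W}.Finite := by
  have hQ : ∀ (l : ℂ) (v w : V), (A + l • B) v w = B ((P + l • (LinearMap.id : V →ₗ[ℂ] V)) v) w := by
    intro l v w
    simp [← hP v w]
  have key : ∀ l : ℂ, (∀ v : V, (∀ w : V, (A + l • B) v w = 0) → v = 0) →
      orthComp (A + l • B) L = L := by
    intro l hnd
    set f : V →ₗ[ℂ] V := P + l • (LinearMap.id : V →ₗ[ℂ] V) with hf
    have hinj : Function.Injective f := by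
      rw [← LinearMap.ker_eq_bot, Submodule.eq_bot_iff]
      intro v hv
      apply hnd
      intro w
      rw [hQ, LinearMap.mem_ker.mp hv, map_zero, LinearMap.zero_apply]
    have hmaple : Submodule.map f L ≤ L := by
      rintro x ⟨u, hu, rfl⟩
      simp only [hf, LinearMap.add_apply, LinearMap.smul_apply, LinearMap.id_apply]
      exact L.add_mem (hInv ⟨u, hu, rfl⟩) (L.smul_mem l hu)
    have hmapeq : Submodule.map f L = L := by
      apply Submodule.eq_of_le_of_finrank_eq hmaple
      exact (L.equivMapOfInjective f hinj).finrank_eq.symm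
    ext v
    rw [mem_orthComp]
    constructor
    · intro h
      have hv : v ∈ orthComp B L := by
        rw [mem_orthComp]
        intro u hu
        rw [← hmapeq] at hu
        obtain ⟨u', hu', rfl⟩ := hu
        have := h u' hu'
        rwa [hQ] at this
      rwa [hLag] at hv
    · intro hv u hu
      rw [hQ]
      have h1 : f u ∈ L := hmaple ⟨u, hu, rfl⟩
      have hvB : v ∈ orthComp B L := by rw [hLag]; exact hv
      exact mem_orthComp.mp hvB _ h1
  refine ⟨key, L, ?_⟩
  have hsub : {l : ℂ | orthComp (A + l • B) L ≠ L} ⊆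
      {l : ℂ | Module.End.HasEigenvalue P (-l)} := by
    intro l hl
    by_contra hne
    apply hl
    apply key
    intro v hv
    by_contra hv0
    apply hne
    refine Module.End.hasEigenvalue_of_hasEigenvector ⟨?_, hv0⟩
    have h0 : (P + l • (LinearMap.id : V →ₗ[ℂ] V)) v = 0 := by
      apply hBnd
      intro w
      rw [← hQ]
      exact hv w
    have := h0
    simp only [LinearMap.add_apply, LinearMap.smul_apply, LinearMap.id_apply] at this
    rw [Module.End.mem_eigenspace_iff]
    linear_combination (norm := module) this
  apply Set.Finite.subset _ hsub
  have : {l : ℂ | Module.End.HasEigenvalue P (-l)} =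
      (fun l : ℂ => -l) ⁻¹' {μ : ℂ | Module.End.HasEigenvalue P μ} := rfl
  rw [this]
  apply Set.Finite.preimage (Set.injOn_of_injective neg_injective)
  have hfin : {μ : ℂ | (minpoly ℂ P).IsRoot μ}.Finite :=
    Polynomial.finite_setOf_isRoot (minpoly.ne_zero (Algebra.IsIntegral.isIntegral P))
  apply hfin.subset
  intro μ hμ
  exact (Module.End.hasEigenvalue_iff_isRoot).mp hμ
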